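/- (Soundness of the ε-accurate empirical stopping criterion.) With the probe setup below, fix i ∈ ℕ, k ≥ 2, ε > 0, and δ ∈ (0,1), and suppose 2^{M+2}·(k+1)·exp(−(k−1)·ε²/18) ≤ δ. Then with probability at least 1 − δ the following implication holds: if the empirical stopping criterion is met, i.e. TV(P̂_i^{i+k}, P̂_{i+j}^{i+j+k}) ≤ ε/3 for all 1 ≤ j ≤ k and TV(P̂_i^{i+k−1}, P̂_{i+j}^{i+j+k−1}) ≤ ε/3 for all 1 ≤ j ≤ k−1, then the true mixtures satisfy TV(P̄_i^{i+k}, P̄_{i+j}^{i+j+k}) ≤ ε for all 1 ≤ j ≤ k and TV(P̄_i^{i+k−1}, P̄_{i+j}^{i+j+k−1}) ≤ ε for all 1 ≤ j ≤ k−1. -/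

import Mathlib

/-!
On the good event where, for every start `l ∈ [i, i + k]`, window length `t ∈ {k - 1, k}` and
set `S`, the empirical mixture is within `ε / 3` of the true one, the triangle inequality turns
empirical `ε / 3`-stability into true `ε`-stability. For fixed `l, t, S`, `t (P̄ - P̂)(S)` is
minus a sum of the martingale differences `Z^S_τ - p^S_τ`, which are bounded by `1`; the
conditional Hoeffding lemma makes this sum sub-Gaussian with variance proxy `t`
(Azuma–Hoeffding), so each of the `(k + 1) · 2 · 2^M` deviations exceeds `ε / 3` with
probability at most `2 exp (-t ε² / 18)`, and a union bound leaves probability at most `δ`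
for the bad event.
-/

open MeasureTheory Finset

/-- Probe indicator: `Z^S_τ ω = 𝟙{Y τ ω ∈ S}`, as a real number. -/
noncomputable def probeZ {Ω : Type*} {M : ℕ} (Y : ℕ → Ω → Fin M)
    (S : Finset (Fin M)) (τ : ℕ) (ω : Ω) : ℝ :=
  if Y τ ω ∈ S then 1 else 0

/-- Conditional probability of the probe event given the past:
`p^S_τ = E[Z^S_τ ∣ 𝓕_{τ-1}]`. -/
noncomputable def probeP {Ω : Type*} {m0 : MeasurableSpace Ω} (μ : Measure Ω) {M : ℕ}
    (ℱ : Filtration ℕ m0) (Y : ℕ → Ω → Fin M) (S : Finset (Fin M)) (τ : ℕ) : Ω → ℝ :=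
  μ[probeZ Y S τ | ℱ (τ - 1)]

/-- Empirical mixture: `P̂_l^{l+t}(S) = (1/t) ∑_{τ=l+1}^{l+t} Z^S_τ`. -/
noncomputable def empMix {Ω : Type*} {M : ℕ} (Y : ℕ → Ω → Fin M)
    (l t : ℕ) (S : Finset (Fin M)) (ω : Ω) : ℝ :=
  (1 / (t : ℝ)) * ∑ τ ∈ Icc (l + 1) (l + t), probeZ Y S τ ω

/-- True mixture: `P̄_l^{l+t}(S) = (1/t) ∑_{τ=l+1}^{l+t} p^S_τ`. -/
noncomputable def trueMix {Ω : Type*} {m0 : MeasurableSpace Ω} (μ : Measure Ω) {M : ℕ}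
    (ℱ : Filtration ℕ m0) (Y : ℕ → Ω → Fin M)
    (l t : ℕ) (S : Finset (Fin M)) (ω : Ω) : ℝ :=
  (1 / (t : ℝ)) * ∑ τ ∈ Icc (l + 1) (l + t), probeP μ ℱ Y S τ ω

/-- Total variation distance between two set functions `Q, R : Finset (Fin M) → ℝ`:
`TV(Q, R) = sup_{S ⊆ Fin M} |Q S − R S|`. -/
noncomputable def tvSetFn {M : ℕ} (Q R : Finset (Fin M) → ℝ) : ℝ :=
  ⨆ S : Finset (Fin M), |Q S - R S|

open ProbabilityTheory

section Azuma

variable {Ω : Type*} {m m0 : MeasurableSpace Ω} {μ : Measure Ω}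

theorem integral_mul_le_of_condExp_le [IsFiniteMeasure μ] (hm : m ≤ m0) {G H : Ω → ℝ}
    (hG : StronglyMeasurable[m] G) (hG₀ : 0 ≤ G) (hGint : Integrable G μ)
    (hH : Integrable H μ) (hGH : Integrable (G * H) μ) {c : ℝ}
    (hc : μ[H | m] ≤ᵐ[μ] fun _ => c) :
    ∫ ω, (G * H) ω ∂μ ≤ (∫ ω, G ω ∂μ) * c := by
  rw [← integral_condExp hm, ← integral_mul_const]
  refine integral_mono_ae integrable_condExp (hGint.mul_const c) ?_
  filter_upwards [condExp_mul_of_stronglyMeasurable_left hG hGH hH, hc] with ω hpull hω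
  rw [hpull]
  exact mul_le_mul_of_nonneg_left hω (hG₀ ω)

variable {ℱ : Filtration ℕ m0} {X : ℕ → Ω → ℝ}

theorem ae_abs_sum_Icc_le (hbdd : ∀ τ, ∀ᵐ ω ∂μ, |X τ ω| ≤ 1) (l t : ℕ) :
    ∀ᵐ ω ∂μ, |∑ τ ∈ Icc (l + 1) (l + t), X τ ω| ≤ t := by
  filter_upwards [ae_all_iff.2 hbdd] with ω hω
  calc |∑ τ ∈ Icc (l + 1) (l + t), X τ ω| ≤ ∑ τ ∈ Icc (l + 1) (l + t), |X τ ω| :=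
        abs_sum_le_sum_abs _ _
    _ ≤ ∑ _τ ∈ Icc (l + 1) (l + t), (1 : ℝ) := sum_le_sum fun τ _ => hω τ
    _ = t := by simp

variable [IsProbabilityMeasure μ]

theorem condExp_exp_mul_le_of_abs_le_one (hm : m ≤ m0) {X : Ω → ℝ}
    (hX : AEStronglyMeasurable X μ) (hbdd : ∀ᵐ ω ∂μ, |X ω| ≤ 1) (hzero : μ[X | m] =ᵐ[μ] 0)
    (t : ℝ) : μ[fun ω => Real.exp (t * X ω) | m] ≤ᵐ[μ] fun _ => Real.exp (t ^ 2 / 2) := by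
  have hIcc : ∀ᵐ ω ∂μ, X ω ∈ Set.Icc (-1) 1 := hbdd.mono fun ω h => abs_le.1 h
  have hXint : Integrable X μ := .of_mem_Icc (-1) 1 hX.aemeasurable hIcc
  have hlin : μ[(fun _ => Real.cosh t) + Real.sinh t • X | m] =ᵐ[μ] fun _ => Real.cosh t := by
    filter_upwards [condExp_add (integrable_const _) (hXint.smul (Real.sinh t)) m,
      condExp_smul (μ := μ) (Real.sinh t) X m, hzero] with ω hadd hsmul h0
    rw [hadd, Pi.add_apply, hsmul, condExp_const hm]
    simp [h0]
  have hmono := condExp_mono (m := m) (integrable_exp_mul_of_mem_Icc (t := t) hX.aemeasurable hIcc)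
    ((integrable_const (Real.cosh t)).add (hXint.smul (Real.sinh t)))
    (hbdd.mono fun ω hω => by
      simpa [mul_comm t (X ω), mul_comm (Real.sinh t) (X ω)] using Real.exp_mul_le_cosh_add_mul_sinh hω t)
  exact (hmono.trans_eq hlin).trans (.of_forall fun _ => Real.cosh_le_exp_half_sq t)

theorem integrable_exp_mul_sum_Icc (hadp : StronglyAdapted ℱ X)
    (hbdd : ∀ τ, ∀ᵐ ω ∂μ, |X τ ω| ≤ 1) (l t : ℕ) (s : ℝ) :
    Integrable (fun ω => Real.exp (s * ∑ τ ∈ Icc (l + 1) (l + t), X τ ω)) μ :=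
  integrable_exp_mul_of_mem_Icc
    (Finset.aemeasurable_fun_sum _ fun τ _ => ((hadp τ).mono (ℱ.le τ)).measurable.aemeasurable)
    ((ae_abs_sum_Icc_le hbdd l t).mono fun _ h => abs_le.1 h)

theorem integral_exp_mul_sum_Icc_le (hadp : StronglyAdapted ℱ X)
    (hbdd : ∀ τ, ∀ᵐ ω ∂μ, |X τ ω| ≤ 1) (hzero : ∀ τ, μ[X (τ + 1) | ℱ τ] =ᵐ[μ] 0)
    (l : ℕ) (s : ℝ) (t : ℕ) :
    ∫ ω, Real.exp (s * ∑ τ ∈ Icc (l + 1) (l + t), X τ ω) ∂μ ≤ Real.exp (t * s ^ 2 / 2) := by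
  induction t with
  | zero => simp
  | succ t ih =>
    set G : Ω → ℝ := fun ω => Real.exp (s * ∑ τ ∈ Icc (l + 1) (l + t), X τ ω)
    set H : Ω → ℝ := fun ω => Real.exp (s * X (l + t + 1) ω)
    have hsplit : (fun ω => Real.exp (s * ∑ τ ∈ Icc (l + 1) (l + (t + 1)), X τ ω)) = G * H := by
      ext ω
      simp [G, H, ← add_assoc, sum_Icc_succ_top, mul_add, Real.exp_add]
    have hG : StronglyMeasurable[ℱ (l + t)] G :=
      Real.continuous_exp.comp_stronglyMeasurable ((Finset.stronglyMeasurable_fun_sum _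
        fun τ hτ => (hadp τ).mono (ℱ.mono (mem_Icc.1 hτ).2)).const_mul s)
    have hXm : AEStronglyMeasurable (X (l + t + 1)) μ :=
      ((hadp _).mono (ℱ.le _)).aestronglyMeasurable
    have hH : Integrable H μ := integrable_exp_mul_of_mem_Icc hXm.aemeasurable
      ((hbdd _).mono fun _ h => abs_le.1 h)
    have hGH : Integrable (G * H) μ := hsplit ▸ integrable_exp_mul_sum_Icc hadp hbdd l (t + 1) s
    rw [hsplit]
    calc ∫ ω, (G * H) ω ∂μ ≤ (∫ ω, G ω ∂μ) * Real.exp (s ^ 2 / 2) :=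
          integral_mul_le_of_condExp_le (ℱ.le _) hG (fun _ => (Real.exp_pos _).le)
            (integrable_exp_mul_sum_Icc hadp hbdd l t s) hH hGH
            (condExp_exp_mul_le_of_abs_le_one (ℱ.le _) hXm (hbdd _) (hzero _) s)
      _ ≤ Real.exp (t * s ^ 2 / 2) * Real.exp (s ^ 2 / 2) := by gcongr
      _ = Real.exp ((t + 1 : ℕ) * s ^ 2 / 2) := by rw [← Real.exp_add]; push_cast; ring_nf

theorem hasSubgaussianMGF_sum_Icc (hadp : StronglyAdapted ℱ X)
    (hbdd : ∀ τ, ∀ᵐ ω ∂μ, |X τ ω| ≤ 1) (hzero : ∀ τ, μ[X (τ + 1) | ℱ τ] =ᵐ[μ] 0) (l t : ℕ) :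
    HasSubgaussianMGF (fun ω => ∑ τ ∈ Icc (l + 1) (l + t), X τ ω) t μ where
  integrable_exp_mul := integrable_exp_mul_sum_Icc hadp hbdd l t
  mgf_le s := by simpa [mgf] using integral_exp_mul_sum_Icc_le hadp hbdd hzero l s t

theorem measure_abs_sum_Icc_ge_le (hadp : StronglyAdapted ℱ X)
    (hbdd : ∀ τ, ∀ᵐ ω ∂μ, |X τ ω| ≤ 1) (hzero : ∀ τ, μ[X (τ + 1) | ℱ τ] =ᵐ[μ] 0)
    (l t : ℕ) {a : ℝ} (ha : 0 ≤ a) :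
    μ {ω | a ≤ |∑ τ ∈ Icc (l + 1) (l + t), X τ ω|}
      ≤ ENNReal.ofReal (2 * Real.exp (-a ^ 2 / (2 * t))) := by
  have hsubG := hasSubgaussianMGF_sum_Icc hadp hbdd hzero l t
  have htail : ∀ Z : Ω → ℝ, HasSubgaussianMGF Z t μ →
      μ {ω | a ≤ Z ω} ≤ ENNReal.ofReal (Real.exp (-a ^ 2 / (2 * t))) := fun Z hZ => by
    rw [← ofReal_measureReal]
    simpa using ENNReal.ofReal_le_ofReal (hZ.measure_ge_le ha)
  calc μ {ω | a ≤ |∑ τ ∈ Icc (l + 1) (l + t), X τ ω|}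
      ≤ μ ({ω | a ≤ ∑ τ ∈ Icc (l + 1) (l + t), X τ ω}
          ∪ {ω | a ≤ (-fun ω => ∑ τ ∈ Icc (l + 1) (l + t), X τ ω) ω}) :=
        measure_mono fun ω hω => by simpa [le_abs] using hω
    _ ≤ _ := (measure_union_le _ _).trans (add_le_add (htail _ hsubG) (htail _ hsubG.neg))
    _ = _ := by
        rw [← ENNReal.ofReal_add (by positivity) (by positivity)]
        ring_nf

end Azuma

section Probe

variable {Ω : Type*} {m0 : MeasurableSpace Ω} (μ : Measure Ω) [IsProbabilityMeasure μ]
  (ℱ : Filtration ℕ m0) {M : ℕ} (Y : ℕ → Ω → Fin M)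

noncomputable def probeDiff (S : Finset (Fin M)) (τ : ℕ) : Ω → ℝ :=
  probeZ Y S τ - probeP μ ℱ Y S τ

omit [IsProbabilityMeasure μ] in
theorem probeZ_mem_Icc (S : Finset (Fin M)) (τ : ℕ) (ω : Ω) :
    probeZ Y S τ ω ∈ Set.Icc (0 : ℝ) 1 := by
  unfold probeZ
  split_ifs <;> simp

theorem stronglyMeasurable_probeZ {m : MeasurableSpace Ω} (S : Finset (Fin M)) {τ : ℕ}
    (hY : Measurable[m] (Y τ)) : StronglyMeasurable[m] (probeZ Y S τ) :=
  (Measurable.ite (hY (Set.toFinite _).measurableSet) measurable_const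
    measurable_const).stronglyMeasurable

variable {Y}

theorem integrable_probeZ (hY : ∀ τ, Measurable[ℱ τ] (Y τ)) (S : Finset (Fin M)) (τ : ℕ) :
    Integrable (probeZ Y S τ) μ :=
  .of_mem_Icc 0 1 ((stronglyMeasurable_probeZ Y S (hY τ)).mono (ℱ.le τ)).measurable.aemeasurable
    (.of_forall (probeZ_mem_Icc Y S τ))

theorem probeP_mem_Icc (hY : ∀ τ, Measurable[ℱ τ] (Y τ)) (S : Finset (Fin M)) (τ : ℕ) :
    ∀ᵐ ω ∂μ, probeP μ ℱ Y S τ ω ∈ Set.Icc (0 : ℝ) 1 := by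
  have h₀ : 0 ≤ᵐ[μ] probeP μ ℱ Y S τ :=
    condExp_nonneg (.of_forall fun ω => (probeZ_mem_Icc Y S τ ω).1)
  have h₁ : probeP μ ℱ Y S τ ≤ᵐ[μ] fun _ => 1 :=
    (condExp_mono (integrable_probeZ μ ℱ hY S τ) (integrable_const 1)
      (.of_forall fun ω => (probeZ_mem_Icc Y S τ ω).2)).trans_eq
      (.of_eq (condExp_const (ℱ.le _) 1))
  filter_upwards [h₀, h₁] with ω using And.intro

omit [IsProbabilityMeasure μ] in
theorem stronglyAdapted_probeDiff (hY : ∀ τ, Measurable[ℱ τ] (Y τ)) (S : Finset (Fin M)) :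
    StronglyAdapted ℱ (probeDiff μ ℱ Y S) := fun τ =>
  (stronglyMeasurable_probeZ Y S (hY τ)).sub
    (stronglyMeasurable_condExp.mono (ℱ.mono (Nat.sub_le τ 1)))

theorem abs_probeDiff_le_one (hY : ∀ τ, Measurable[ℱ τ] (Y τ)) (S : Finset (Fin M)) (τ : ℕ) :
    ∀ᵐ ω ∂μ, |probeDiff μ ℱ Y S τ ω| ≤ 1 := by
  filter_upwards [probeP_mem_Icc μ ℱ hY S τ] with ω hp
  have hz := probeZ_mem_Icc Y S τ ω
  rw [probeDiff, Pi.sub_apply, abs_le]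
  constructor <;> linarith [hz.1, hz.2, hp.1, hp.2]

theorem condExp_probeDiff_succ (hY : ∀ τ, Measurable[ℱ τ] (Y τ)) (S : Finset (Fin M)) (τ : ℕ) :
    μ[probeDiff μ ℱ Y S (τ + 1) | ℱ τ] =ᵐ[μ] 0 := by
  have hP : probeP μ ℱ Y S (τ + 1) = μ[probeZ Y S (τ + 1) | ℱ τ] := by simp [probeP]
  rw [probeDiff, hP]
  filter_upwards [condExp_sub (integrable_probeZ μ ℱ hY S (τ + 1)) integrable_condExp (ℱ τ)]
    with ω h
  rw [h, condExp_of_stronglyMeasurable (ℱ.le τ) stronglyMeasurable_condExp integrable_condExp]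
  simp

omit [IsProbabilityMeasure μ] in
theorem trueMix_sub_empMix (l t : ℕ) (S : Finset (Fin M)) (ω : Ω) :
    trueMix μ ℱ Y l t S ω - empMix Y l t S ω
      = -((1 / (t : ℝ)) * ∑ τ ∈ Icc (l + 1) (l + t), probeDiff μ ℱ Y S τ ω) := by
  simp only [trueMix, empMix, probeDiff, Pi.sub_apply, sum_sub_distrib]
  ring

theorem measure_abs_trueMix_sub_empMix_gt_le (hY : ∀ τ, Measurable[ℱ τ] (Y τ))
    (l : ℕ) {t : ℕ} (ht : 1 ≤ t) (S : Finset (Fin M)) {a : ℝ} (ha : 0 ≤ a) :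
    μ {ω | a < |trueMix μ ℱ Y l t S ω - empMix Y l t S ω|}
      ≤ ENNReal.ofReal (2 * Real.exp (-t * a ^ 2 / 2)) := by
  have htpos : (0 : ℝ) < t := by exact_mod_cast ht
  have hsub : {ω | a < |trueMix μ ℱ Y l t S ω - empMix Y l t S ω|}
      ⊆ {ω | t * a ≤ |∑ τ ∈ Icc (l + 1) (l + t), probeDiff μ ℱ Y S τ ω|} := fun ω hω => by
    rw [Set.mem_ofPred_eq, trueMix_sub_empMix, abs_neg, abs_mul, abs_of_pos (by positivity),
      one_div_mul_eq_div, lt_div_iff₀ htpos] at hω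
    rw [Set.mem_ofPred_eq, mul_comm]
    exact hω.le
  refine (measure_mono hsub).trans ((measure_abs_sum_Icc_ge_le
    (stronglyAdapted_probeDiff μ ℱ hY S) (abs_probeDiff_le_one μ ℱ hY S)
    (condExp_probeDiff_succ μ ℱ hY S) l t (by positivity)).trans_eq ?_)
  congr 3
  field_simp

theorem measure_exists_abs_trueMix_sub_empMix_gt_le (hY : ∀ τ, Measurable[ℱ τ] (Y τ))
    (i : ℕ) {k : ℕ} (hk : 2 ≤ k) {a : ℝ} (ha : 0 ≤ a) :
    μ {ω | ∃ l ∈ Icc i (i + k), ∃ t ∈ ({k - 1, k} : Finset ℕ), ∃ S,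
        a < |trueMix μ ℱ Y l t S ω - empMix Y l t S ω|}
      ≤ ENNReal.ofReal (2 ^ (M + 2) * (k + 1) * Real.exp (-((k : ℝ) - 1) * a ^ 2 / 2)) := by
  set I := (Icc i (i + k) ×ˢ ({k - 1, k} : Finset ℕ)) ×ˢ (univ : Finset (Finset (Fin M)))
  set bound := ENNReal.ofReal (2 * Real.exp (-((k : ℝ) - 1) * a ^ 2 / 2))
  have hbad : ∀ p ∈ I, μ {ω | a < |trueMix μ ℱ Y p.1.1 p.1.2 p.2 ω - empMix Y p.1.1 p.1.2 p.2 ω|}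
      ≤ bound := by
    rintro ⟨⟨l, t⟩, S⟩ hp
    obtain ⟨-, ht⟩ : l ∈ Icc i (i + k) ∧ (t = k - 1 ∨ t = k) := by simpa [I] using hp
    have hkt : (k : ℝ) - 1 ≤ t := by
      rcases ht with ht | ht <;> simp [ht, Nat.cast_sub (by omega : 1 ≤ k)]
    refine (measure_abs_trueMix_sub_empMix_gt_le μ ℱ hY l (t := t) (by omega) S ha).trans ?_
    simp only [bound]
    gcongr
  have hcard : (#I : ℝ) = 2 ^ (M + 1) * (k + 1) := by
    simp only [I, card_product, Nat.card_Icc, card_pair (by omega : k - 1 ≠ k), card_univ,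
      Fintype.card_finset, Fintype.card_fin]
    push_cast [show i + k + 1 - i = k + 1 by omega]
    ring
  calc μ _ ≤ μ (⋃ p ∈ I,
        {ω | a < |trueMix μ ℱ Y p.1.1 p.1.2 p.2 ω - empMix Y p.1.1 p.1.2 p.2 ω|}) :=
        measure_mono fun ω hω => by
          obtain ⟨l, hl, t, ht, S, hS⟩ := hω
          exact Set.mem_biUnion (x := ((l, t), S)) (by simp_all [I]) hS
    _ ≤ ∑ p ∈ I, μ {ω | a < |trueMix μ ℱ Y p.1.1 p.1.2 p.2 ω - empMix Y p.1.1 p.1.2 p.2 ω|} :=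
        measure_biUnion_finset_le _ _
    _ ≤ #I • bound := sum_le_card_nsmul _ _ _ hbad
    _ = _ := by
        rw [nsmul_eq_mul, ← ENNReal.ofReal_natCast, ← ENNReal.ofReal_mul (by positivity), hcard]
        ring_nf

end Probe

theorem tvSetFn_le_of_abs_sub_le {M : ℕ} {Q Q' R R' : Finset (Fin M) → ℝ} {a b : ℝ}
    (hQ : ∀ S, |Q S - Q' S| ≤ a) (hR : ∀ S, |R S - R' S| ≤ b) :
    tvSetFn Q R ≤ a + tvSetFn Q' R' + b :=
  ciSup_le fun S => by
    have hQ'R' : |Q' S - R' S| ≤ tvSetFn Q' R' :=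
      le_ciSup (f := fun S => |Q' S - R' S|) (Set.finite_range _).bddAbove S
    have := abs_le.1 (hQ S)
    have := abs_le.1 (hR S)
    have := abs_le.1 hQ'R'
    rw [abs_le]
    constructor <;> linarith

/-- `P l t` stands for a mixture over the window `l + 1, …, l + t`. -/
def StoppingCriterion {M : ℕ} (P : ℕ → ℕ → Finset (Fin M) → ℝ) (i k : ℕ) (η : ℝ) : Prop :=
  (∀ j, 1 ≤ j → j ≤ k → tvSetFn (P i k) (P (i + j) k) ≤ η) ∧
    (∀ j, 1 ≤ j → j ≤ k - 1 → tvSetFn (P i (k - 1)) (P (i + j) (k - 1)) ≤ η)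

theorem StoppingCriterion.of_abs_sub_le {M : ℕ} {P Q : ℕ → ℕ → Finset (Fin M) → ℝ} {i k : ℕ}
    {η c : ℝ} (hPQ : ∀ l ∈ Icc i (i + k), ∀ t ∈ ({k - 1, k} : Finset ℕ), ∀ S,
      |P l t S - Q l t S| ≤ c)
    (hQ : StoppingCriterion Q i k η) : StoppingCriterion P i k (c + η + c) := by
  have hl : ∀ j ≤ k, i + j ∈ Icc i (i + k) := fun j hj => mem_Icc.2 ⟨by omega, by omega⟩
  refine ⟨fun j hj₁ hjk => ?_, fun j hj₁ hjk => ?_⟩ <;>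
    refine (tvSetFn_le_of_abs_sub_le (hPQ i (hl 0 (by omega)) _ (by simp))
      (hPQ (i + j) (hl j (by omega)) _ (by simp))).trans ?_
  · gcongr; exact hQ.1 j hj₁ hjk
  · gcongr; exact hQ.2 j hj₁ hjk

theorem ofReal_one_sub_le_measure {Ω : Type*} {m0 : MeasurableSpace Ω} {μ : Measure Ω}
    [IsProbabilityMeasure μ] {s : Set Ω} {δ : ℝ} (hδ : 0 ≤ δ)
    (h : μ sᶜ ≤ ENNReal.ofReal δ) : ENNReal.ofReal (1 - δ) ≤ μ s := by
  rw [ENNReal.ofReal_sub _ hδ, ENNReal.ofReal_one, ← measure_univ (μ := μ)]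
  exact tsub_le_iff_right.2 ((measure_univ_le_add_compl s).trans (by gcongr))

theorem empirical_stopping_sound_general {Ω : Type*} {m0 : MeasurableSpace Ω}
    (μ : Measure Ω) [IsProbabilityMeasure μ] (ℱ : Filtration ℕ m0)
    {M : ℕ} (Y : ℕ → Ω → Fin M)
    (hY : ∀ τ, Measurable[ℱ τ] (Y τ))
    (i k : ℕ) (hk : 2 ≤ k) {ε δ : ℝ} (hε : 0 < ε) (hδ : δ ∈ Set.Ioo (0 : ℝ) 1)
    (hkey : 2 ^ (M + 2) * (k + 1) * Real.exp (-((k : ℝ) - 1) * ε ^ 2 / 18) ≤ δ) :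
    ENNReal.ofReal (1 - δ) ≤
      μ {ω |
        ((∀ j, 1 ≤ j → j ≤ k →
            tvSetFn (fun S => empMix Y i k S ω) (fun S => empMix Y (i + j) k S ω) ≤ ε / 3) ∧
         (∀ j, 1 ≤ j → j ≤ k - 1 →
            tvSetFn (fun S => empMix Y i (k - 1) S ω)
              (fun S => empMix Y (i + j) (k - 1) S ω) ≤ ε / 3)) →
        ((∀ j, 1 ≤ j → j ≤ k →
            tvSetFn (fun S => trueMix μ ℱ Y i k S ω)
              (fun S => trueMix μ ℱ Y (i + j) k S ω) ≤ ε) ∧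
         (∀ j, 1 ≤ j → j ≤ k - 1 →
            tvSetFn (fun S => trueMix μ ℱ Y i (k - 1) S ω)
              (fun S => trueMix μ ℱ Y (i + j) (k - 1) S ω) ≤ ε))} := by
  refine ofReal_one_sub_le_measure hδ.1.le ((measure_mono fun ω hω => ?_).trans
    ((measure_exists_abs_trueMix_sub_empMix_gt_le μ ℱ hY i hk (a := ε / 3) (by positivity)).trans
      (ENNReal.ofReal_le_ofReal ?_)))
  · by_contra hgood
    simp only [Set.mem_ofPred_eq, not_exists, not_and, not_lt] at hgood
    refine hω fun hemp => ?_
    have hsound := StoppingCriterion.of_abs_sub_le (P := fun l t S => trueMix μ ℱ Y l t S ω)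
      (Q := fun l t S => empMix Y l t S ω) hgood hemp
    rwa [show ε / 3 + ε / 3 + ε / 3 = ε by ring] at hsound
  · rwa [show -((k : ℝ) - 1) * (ε / 3) ^ 2 / 2 = -((k : ℝ) - 1) * ε ^ 2 / 18 by ring]

/-- **Soundness of the ε-accurate empirical stopping criterion.**
Fix `i ∈ ℕ`, `k ≥ 2`, `ε > 0`, `δ ∈ (0,1)`, and suppose
`2^{M+2} · (k+1) · exp(−(k−1) ε² / 18) ≤ δ`.  Then with probability at least
`1 − δ`: if the empirical stopping criterion holds, i.e.
`TV(P̂_i^{i+k}, P̂_{i+j}^{i+j+k}) ≤ ε/3` for all `1 ≤ j ≤ k` and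
`TV(P̂_i^{i+k−1}, P̂_{i+j}^{i+j+k−1}) ≤ ε/3` for all `1 ≤ j ≤ k−1`, then the true
mixtures satisfy the analogous inequalities with tolerance `ε`. -/
theorem empirical_stopping_sound {Ω : Type*} {m0 : MeasurableSpace Ω}
    (μ : Measure Ω) [IsProbabilityMeasure μ] (ℱ : Filtration ℕ m0)
    {M : ℕ} (hM : 1 ≤ M) (Y : ℕ → Ω → Fin M)
    (hY : ∀ τ, Measurable[ℱ τ] (Y τ))
    (i k : ℕ) (hk : 2 ≤ k) {ε δ : ℝ} (hε : 0 < ε) (hδ : δ ∈ Set.Ioo (0 : ℝ) 1)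
    (hkey : 2 ^ (M + 2) * (k + 1) * Real.exp (-((k : ℝ) - 1) * ε ^ 2 / 18) ≤ δ) :
    ENNReal.ofReal (1 - δ) ≤
      μ {ω |
        ((∀ j, 1 ≤ j → j ≤ k →
            tvSetFn (fun S => empMix Y i k S ω) (fun S => empMix Y (i + j) k S ω) ≤ ε / 3) ∧
         (∀ j, 1 ≤ j → j ≤ k - 1 →
            tvSetFn (fun S => empMix Y i (k - 1) S ω)
              (fun S => empMix Y (i + j) (k - 1) S ω) ≤ ε / 3)) →
        ((∀ j, 1 ≤ j → j ≤ k →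
            tvSetFn (fun S => trueMix μ ℱ Y i k S ω)
              (fun S => trueMix μ ℱ Y (i + j) k S ω) ≤ ε) ∧
         (∀ j, 1 ≤ j → j ≤ k - 1 →
            tvSetFn (fun S => trueMix μ ℱ Y i (k - 1) S ω)
              (fun S => trueMix μ ℱ Y (i + j) (k - 1) S ω) ≤ ε))} :=
  empirical_stopping_sound_general μ ℱ Y hY i k hk hε hδ hkey
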